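/- arXiv:2001.06914 — 8 statements merged into one kernel-verified Lean document; each statement's English description precedes it below -/
import Mathlib

section
/- If the weights π_i(t) of a portfolio are nonnegative for all i = 1,…,n, then the excess growth rate γ*_π(t) = (1/2)(Σ_i π_i(t)σ_ii(t) − Σ_{i,j} π_i(t)π_j(t)σ_ij(t)) is nonnegative almost surely, where (σ_ij) is a symmetric positive semidefinite covariance matrix. -/
/-!
With `e i` the standard basis vectors and `q x = xᵀ A x`, the identity
`∑ i, p i * q (e i - p) = ∑ i, p i * A i i - q p` (valid whenever `∑ i, p i = 1`) exhibits the
excess growth rate as half the `p`-weighted variance of the basis vectors around their mean `p`,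
measured by the positive semidefinite form `q`; every summand is nonnegative.
-/
open Matrix Finset

variable {ι R : Type*} [Fintype ι]

theorem Matrix.sum_mul_dotProduct_mulVec_single_sub [DecidableEq ι] [CommRing R]
    (A : Matrix ι ι R) (p : ι → R) (hp : ∑ i, p i = 1) :
    ∑ i, p i * ((Pi.single i 1 - p) ⬝ᵥ A *ᵥ (Pi.single i 1 - p)) =
      ∑ i, p i * A i i - p ⬝ᵥ A *ᵥ p := by
  have hrow : ∑ i, p i * (p ⬝ᵥ A.col i) = p ⬝ᵥ A *ᵥ p := by
    rw [dotProduct_mulVec, dotProduct_comm]; rfl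
  have hcol : ∑ i, p i * (A *ᵥ p) i = p ⬝ᵥ A *ᵥ p := rfl
  simp only [mulVec_sub, sub_dotProduct, dotProduct_sub, mulVec_single_one, single_one_dotProduct,
    mul_sub, sum_sub_distrib, ← sum_mul, hp, one_mul, hrow, hcol, col_apply]
  ring

theorem Matrix.PosSemidef.sum_mul_diag_sub_dotProduct_mulVec_nonneg [DecidableEq ι] [CommRing R]
    [PartialOrder R] [IsOrderedRing R] [StarRing R] [TrivialStar R] {A : Matrix ι ι R}
    (hA : A.PosSemidef) {p : ι → R} (hp : ∀ i, 0 ≤ p i) (hsum : ∑ i, p i = 1) :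
    0 ≤ ∑ i, p i * A i i - p ⬝ᵥ A *ᵥ p := by
  rw [← sum_mul_dotProduct_mulVec_single_sub A p hsum]
  exact sum_nonneg fun i _ => mul_nonneg (hp i) <| by
    simpa only [star_trivial] using hA.dotProduct_mulVec_nonneg (Pi.single i 1 - p)

theorem Matrix.dotProduct_mulVec_eq_sum_sum [CommSemiring R] (A : Matrix ι ι R) (x : ι → R) :
    x ⬝ᵥ A *ᵥ x = ∑ i, ∑ j, x i * x j * A i j := by
  simp only [dotProduct, mulVec, mul_sum]
  exact sum_congr rfl fun i _ => sum_congr rfl fun j _ => by ring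

/-- If the weights `p i` of a portfolio are nonnegative and sum to 1,
then the excess growth rate `(1/2) * (∑ i, p i * A i i - ∑ i j, p i * p j * A i j)`
is nonnegative, where `A` is a symmetric positive semidefinite covariance matrix. -/
theorem excess_growth_rate_nonneg (n : ℕ) (A : Matrix (Fin n) (Fin n) ℝ)
    (hA : A.PosSemidef) (p : Fin n → ℝ) (hp : ∀ i, 0 ≤ p i)
    (hsum : ∑ i, p i = 1) :
    0 ≤ (1 / 2 : ℝ) * (∑ i, p i * A i i - ∑ i, ∑ j, p i * p j * A i j) := by
  rw [← dotProduct_mulVec_eq_sum_sum]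
  exact mul_nonneg (by norm_num) (hA.sum_mul_diag_sub_dotProduct_mulVec_nonneg hp hsum)
end

section
/- Let n > 2 and let U be a neighborhood of the unit simplex Δⁿ in ℝⁿ. There is no C¹ function h: U → ℝ such that D_j(x_j/x_i + h(x)) = D_i(x_i/x_j + h(x)), D_j(x_ℓ/x_k + h(x)) = D_k(x_i/x_j + h(x)), and D_i(x_ℓ/x_k + h(x)) = D_k(x_j/x_i + h(x)) hold for all x ∈ U, where i, j, k, ℓ are such that i ≠ j, p(i)=j, p(j)=i, k ∉ {i,j}, ℓ ∉ {i,j}. -/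
/-!
The identities are evaluated at a single point of the simplex with positive coordinates. There
the partial derivatives of the quotients are explicit, and the second and third identities give
`D_j h = D_k h = D_i h`; substituted into the first, the `h`-terms cancel and leave
`1 / x_i = 1 / x_j`. A point of the simplex with `x_i ≠ x_j` therefore refutes the identities.
-/

lemma fderiv_coord_div_add {ι : Type*} [Fintype ι] {h : (ι → ℝ) → ℝ} {x : ι → ℝ} (a b : ι)
    (hb : x b ≠ 0) (hh : DifferentiableAt ℝ h x) (v : ι → ℝ) :
    fderiv ℝ (fun y : ι → ℝ => y a / y b + h y) x v
      = v a / x b - x a * v b / x b ^ 2 + fderiv ℝ h x v := by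
  have hinv : HasFDerivAt (fun y : ι → ℝ => (y b)⁻¹)
      (-(x b ^ 2)⁻¹ • ContinuousLinearMap.proj b) x :=
    (hasDerivAt_inv hb).comp_hasFDerivAt x (hasFDerivAt_apply (𝕜 := ℝ) b x)
  have hquot := ((hasFDerivAt_apply (𝕜 := ℝ) a x).fun_mul hinv).fun_add hh.hasFDerivAt
  simp only [div_eq_mul_inv]
  rw [hquot.fderiv]
  simp only [add_apply, smul_apply, ContinuousLinearMap.proj_apply, smul_eq_mul]
  field_simp
  ring

lemma exists_pos_mem_stdSimplex_apply_ne {ι : Type*} [Fintype ι] [DecidableEq ι] {i j : ι}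
    (hij : i ≠ j) : ∃ x ∈ stdSimplex ℝ ι, (∀ m, 0 < x m) ∧ x i ≠ x j := by
  set c : ℝ := Fintype.card ι + 1
  have hc : 0 < c := by positivity
  set x : ι → ℝ := fun m => (1 + (Pi.single i 1 : ι → ℝ) m) / c
  have hpos (m : ι) : 0 < x m := by
    refine div_pos ?_ hc
    rw [Pi.single_apply]
    split_ifs <;> norm_num
  refine ⟨x, ⟨fun m => (hpos m).le, ?_⟩, hpos, ?_⟩
  · simp only [x, ← Finset.sum_div, Finset.sum_add_distrib, Finset.sum_pi_single',
      if_pos (Finset.mem_univ i)]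
    simp [c, hc.ne']
  · simp only [x, Pi.single_eq_same, Pi.single_eq_of_ne hij.symm, add_zero]
    intro hx
    rw [div_left_inj' hc.ne'] at hx
    norm_num at hx

lemma apply_eq_apply_of_two_cycle_conditions {ι : Type*} [Fintype ι] [DecidableEq ι]
    {h : (ι → ℝ) → ℝ} {x : ι → ℝ} {i j k l : ι}
    (hki : k ≠ i) (hkj : k ≠ j) (hli : l ≠ i) (hlj : l ≠ j)
    (hi : x i ≠ 0) (hj : x j ≠ 0) (hk : x k ≠ 0) (hh : DifferentiableAt ℝ h x)
    (hji : fderiv ℝ (fun y : ι → ℝ => y j / y i + h y) x (Pi.single j 1)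
      = fderiv ℝ (fun y : ι → ℝ => y i / y j + h y) x (Pi.single i 1))
    (hlkj : fderiv ℝ (fun y : ι → ℝ => y l / y k + h y) x (Pi.single j 1)
      = fderiv ℝ (fun y : ι → ℝ => y i / y j + h y) x (Pi.single k 1))
    (hlki : fderiv ℝ (fun y : ι → ℝ => y l / y k + h y) x (Pi.single i 1)
      = fderiv ℝ (fun y : ι → ℝ => y j / y i + h y) x (Pi.single k 1)) :
    x i = x j := by
  obtain rfl | hij := eq_or_ne i j
  · rfl
  simp only [fderiv_coord_div_add _ _ hi hh, fderiv_coord_div_add _ _ hj hh,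
    fderiv_coord_div_add _ _ hk hh, Pi.single_eq_same, Pi.single_eq_of_ne hki,
    Pi.single_eq_of_ne hkj, Pi.single_eq_of_ne hli, Pi.single_eq_of_ne hlj,
    Pi.single_eq_of_ne hki.symm, Pi.single_eq_of_ne hkj.symm, Pi.single_eq_of_ne hij,
    Pi.single_eq_of_ne hij.symm,
    mul_zero, zero_div, sub_zero, zero_add, one_div] at hji hlkj hlki
  exact inv_inj.1 (by linarith)

theorem no_exact_h_for_two_cycle_general (n : ℕ) (i j k l : Fin n)
    (hij : i ≠ j) (hki : k ≠ i) (hkj : k ≠ j) (hli : l ≠ i) (hlj : l ≠ j)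
    (U : Set (Fin n → ℝ)) (hUopen : IsOpen U) (hU : stdSimplex ℝ (Fin n) ⊆ U) :
    ¬ ∃ h : (Fin n → ℝ) → ℝ, ContDiffOn ℝ 1 h U ∧
      (∀ x ∈ U,
        fderiv ℝ (fun y : Fin n → ℝ => y j / y i + h y) x (Pi.single j 1)
          = fderiv ℝ (fun y : Fin n → ℝ => y i / y j + h y) x (Pi.single i 1)) ∧
      (∀ x ∈ U,
        fderiv ℝ (fun y : Fin n → ℝ => y l / y k + h y) x (Pi.single j 1)
          = fderiv ℝ (fun y : Fin n → ℝ => y i / y j + h y) x (Pi.single k 1)) ∧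
      (∀ x ∈ U,
        fderiv ℝ (fun y : Fin n → ℝ => y l / y k + h y) x (Pi.single i 1)
          = fderiv ℝ (fun y : Fin n → ℝ => y j / y i + h y) x (Pi.single k 1)) := by
  rintro ⟨h, hC1, hji, hlkj, hlki⟩
  obtain ⟨x, hxΔ, hpos, hxij⟩ := exists_pos_mem_stdSimplex_apply_ne hij
  have hxU : x ∈ U := hU hxΔ
  have hh : DifferentiableAt ℝ h x :=
    (hC1.contDiffAt (hUopen.mem_nhds hxU)).differentiableAt one_ne_zero
  exact hxij <| apply_eq_apply_of_two_cycle_conditions hki hkj hli hlj (hpos i).ne'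
    (hpos j).ne' (hpos k).ne' hh (hji x hxU) (hlkj x hxU) (hlki x hxU)

/-- Let `n > 2` and let `U` be an open neighborhood of the unit simplex
`Δⁿ ⊂ ℝⁿ`. There is no `C¹` function `h : U → ℝ` such that
`D_j (x_j/x_i + h) = D_i (x_i/x_j + h)`, `D_j (x_ℓ/x_k + h) = D_k (x_i/x_j + h)`, and
`D_i (x_ℓ/x_k + h) = D_k (x_j/x_i + h)` hold on `U`, where `i ≠ j` and `k, ℓ ∉ {i, j}`.
(Here `D_a f x = fderiv ℝ f x (Pi.single a 1)`.) -/
theorem no_exact_h_for_two_cycle (n : ℕ) (hn : 2 < n) (i j k l : Fin n)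
    (hij : i ≠ j) (hki : k ≠ i) (hkj : k ≠ j) (hli : l ≠ i) (hlj : l ≠ j)
    (U : Set (Fin n → ℝ)) (hUopen : IsOpen U) (hU : stdSimplex ℝ (Fin n) ⊆ U) :
    ¬ ∃ h : (Fin n → ℝ) → ℝ, ContDiffOn ℝ 1 h U ∧
      (∀ x ∈ U,
        fderiv ℝ (fun y : Fin n → ℝ => y j / y i + h y) x (Pi.single j 1)
          = fderiv ℝ (fun y : Fin n → ℝ => y i / y j + h y) x (Pi.single i 1)) ∧
      (∀ x ∈ U,
        fderiv ℝ (fun y : Fin n → ℝ => y l / y k + h y) x (Pi.single j 1)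
          = fderiv ℝ (fun y : Fin n → ℝ => y i / y j + h y) x (Pi.single k 1)) ∧
      (∀ x ∈ U,
        fderiv ℝ (fun y : Fin n → ℝ => y l / y k + h y) x (Pi.single i 1)
          = fderiv ℝ (fun y : Fin n → ℝ => y j / y i + h y) x (Pi.single k 1)) :=
  no_exact_h_for_two_cycle_general n i j k l hij hki hkj hli hlj U hUopen hU
end

section
/- Let n ≥ 2, let i_1,…,i_m be distinct indices in {1,…,n} with 2 < m ≤ n, and let U be a neighborhood of Δⁿ ⊂ ℝⁿ. There is no C¹ function h: U → ℝ satisfying D_{i_{k+1}}(x_{i_{k+1}}/x_{i_k} + h(x)) = D_{i_k}(x_{i_{k+2}}/x_{i_{k+1}} + h(x)) for k = 1,…,m−2, D_{i_m}(x_{i_m}/x_{i_{m−1}} + h(x)) = D_{i_{m−1}}(x_{i_1}/x_{i_m} + h(x)), and D_{i_1}(x_{i_1}/x_{i_m} + h(x)) = D_{i_m}(x_{i_2}/x_{i_1} + h(x)) for all x ∈ U. -/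
/-!
At a point `x` with positive coordinates, `∂_a (y_a / y_b) = 1 / x_b` while `∂_c (y_d / y_a) = 0`
for `c ∉ {a, d}`. Hence each of the `m` equations says
`∂_{i_{k+1}} h (x) + 1 / x_{i_k} = ∂_{i_k} h (x)`: the partial derivatives of `h` strictly decrease
along the cycle `i_1 → i_2 → ⋯ → i_m → i_1`, which is absurd. The barycenter of the simplex
provides such a point `x` inside `U`, where `h` is differentiable because `U` is open.
-/

open ContinuousLinearMap

section PartialDerivatives

variable {ι : Type*} [Fintype ι] {x : ι → ℝ}

theorem fderiv_apply_div_apply {a b : ι} (hb : x b ≠ 0) (v : ι → ℝ) :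
    fderiv ℝ (fun y : ι → ℝ => y a / y b) x v = v a / x b - x a * v b / x b ^ 2 := by
  have hinv : HasFDerivAt (fun y : ι → ℝ => (y b)⁻¹) (-(x b ^ 2)⁻¹ • proj b) x :=
    (hasDerivAt_inv hb).comp_hasFDerivAt x (hasFDerivAt_apply b x :
      HasFDerivAt (fun y : ι → ℝ => y b) (proj b : (ι → ℝ) →L[ℝ] ℝ) x)
  have hdiv : HasFDerivAt (fun y : ι → ℝ => y a * (y b)⁻¹)
      (x a • (-(x b ^ 2)⁻¹ • proj b) + (x b)⁻¹ • proj a) x :=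
    (hasFDerivAt_apply a x :
      HasFDerivAt (fun y : ι → ℝ => y a) (proj a : (ι → ℝ) →L[ℝ] ℝ) x).mul hinv
  simp only [div_eq_mul_inv, hdiv.fderiv, add_apply, smul_apply, proj_apply, smul_eq_mul]
  ring

theorem fderiv_apply_div_apply_add {h : (ι → ℝ) → ℝ} {a b : ι} (hb : x b ≠ 0)
    (hh : DifferentiableAt ℝ h x) (v : ι → ℝ) :
    fderiv ℝ (fun y : ι → ℝ => y a / y b + h y) x v
      = v a / x b - x a * v b / x b ^ 2 + fderiv ℝ h x v := by
  have hdiv : DifferentiableAt ℝ (fun y : ι → ℝ => y a / y b) x := by fun_prop (disch := exact hb)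
  rw [fderiv_fun_add hdiv hh, add_apply, fderiv_apply_div_apply hb]

variable [DecidableEq ι]

theorem fderiv_apply_single_lt_of_fderiv_div_add_eq {h : (ι → ℝ) → ℝ} {a b c d : ι}
    (hx : ∀ i, 0 < x i) (hh : DifferentiableAt ℝ h x) (hab : a ≠ b) (hca : c ≠ a) (hcd : c ≠ d)
    (heq : fderiv ℝ (fun y : ι → ℝ => y a / y b + h y) x (Pi.single a 1)
      = fderiv ℝ (fun y : ι → ℝ => y d / y a + h y) x (Pi.single c 1)) :
    fderiv ℝ h x (Pi.single a 1) < fderiv ℝ h x (Pi.single c 1) := by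
  rw [fderiv_apply_div_apply_add (hx b).ne' hh, fderiv_apply_div_apply_add (hx a).ne' hh] at heq
  simp only [Pi.single_eq_same, Pi.single_eq_of_ne, Pi.single_eq_of_ne', ne_eq, hab.symm, hca,
    hcd, not_false_eq_true, one_div, mul_zero, zero_div, sub_zero, sub_self, zero_add] at heq
  linarith [inv_pos.mpr (hx b)]

end PartialDerivatives

theorem no_exact_h_for_long_cycle_general (n m : ℕ) (hm : 2 < m)
    (I : ℕ → Fin n) (hinj : Set.InjOn I (Set.Icc 1 m))
    (U : Set (Fin n → ℝ)) (hUopen : IsOpen U) (hU : stdSimplex ℝ (Fin n) ⊆ U) :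
    ¬ ∃ h : (Fin n → ℝ) → ℝ, ContDiffOn ℝ 1 h U ∧
      (∀ x ∈ U, ∀ k : ℕ, 1 ≤ k → k ≤ m - 2 →
        fderiv ℝ (fun y : Fin n → ℝ => y (I (k + 1)) / y (I k) + h y) x
            (Pi.single (I (k + 1)) 1)
          = fderiv ℝ (fun y : Fin n → ℝ => y (I (k + 2)) / y (I (k + 1)) + h y) x
              (Pi.single (I k) 1)) ∧
      (∀ x ∈ U,
        fderiv ℝ (fun y : Fin n → ℝ => y (I m) / y (I (m - 1)) + h y) x
            (Pi.single (I m) 1)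
          = fderiv ℝ (fun y : Fin n → ℝ => y (I 1) / y (I m) + h y) x
              (Pi.single (I (m - 1)) 1)) ∧
      (∀ x ∈ U,
        fderiv ℝ (fun y : Fin n → ℝ => y (I 1) / y (I m) + h y) x
            (Pi.single (I 1) 1)
          = fderiv ℝ (fun y : Fin n → ℝ => y (I 2) / y (I 1) + h y) x
              (Pi.single (I m) 1)) := by
  rintro ⟨h, hC1, hchain, hlast, hwrap⟩
  have : Nonempty (Fin n) := ⟨I 1⟩
  set x := (stdSimplex.barycenter : stdSimplex ℝ (Fin n)).val
  have hx : ∀ i, 0 < x i := fun i => by simpa [x] using i.pos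
  have hxU : x ∈ U := hU (stdSimplex.barycenter : stdSimplex ℝ (Fin n)).2
  have hh : DifferentiableAt ℝ h x :=
    (hC1.differentiableOn one_ne_zero).differentiableAt (hUopen.mem_nhds hxU)
  have hstep {a b c d : Fin n} :=
    fderiv_apply_single_lt_of_fderiv_div_add_eq (a := a) (b := b) (c := c) (d := d) hx hh
  set g : ℕ → ℝ := fun k => fderiv ℝ h x (Pi.single (I k) 1)
  have hanti : StrictAntiOn g (Set.Icc 1 m) := by
    refine strictAntiOn_of_add_one_lt Set.ordConnected_Icc fun k _ ⟨hk1, _⟩ ⟨_, hkm⟩ => ?_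
    rcases Nat.lt_or_ge k (m - 1) with hlt | hge
    · refine hstep ?_ ?_ ?_ (hchain x hxU k hk1 (by omega)) <;>
        exact hinj.ne ⟨by omega, by omega⟩ ⟨by omega, by omega⟩ (by omega)
    · obtain rfl : k = m - 1 := by omega
      rw [Nat.sub_add_cancel (by omega)]
      refine hstep ?_ ?_ ?_ (hlast x hxU) <;>
        exact hinj.ne ⟨by omega, by omega⟩ ⟨by omega, by omega⟩ (by omega)
  have hcycle : g 1 < g m := by
    refine hstep ?_ ?_ ?_ (hwrap x hxU) <;>
      exact hinj.ne ⟨by omega, by omega⟩ ⟨by omega, by omega⟩ (by omega)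
  exact (hanti ⟨le_rfl, by omega⟩ ⟨by omega, le_rfl⟩ (by omega)).not_gt hcycle

/-- Let `2 < m ≤ n`, let `I 1, …, I m` be distinct indices in `Fin n`,
and let `U` be an open neighborhood of the unit simplex `Δⁿ ⊂ ℝⁿ`. There is no `C¹`
function `h : U → ℝ` satisfying
`D_{i_{k+1}}(x_{i_{k+1}}/x_{i_k} + h) = D_{i_k}(x_{i_{k+2}}/x_{i_{k+1}} + h)` for
`k = 1, …, m-2`, together with
`D_{i_m}(x_{i_m}/x_{i_{m-1}} + h) = D_{i_{m-1}}(x_{i_1}/x_{i_m} + h)` and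
`D_{i_1}(x_{i_1}/x_{i_m} + h) = D_{i_m}(x_{i_2}/x_{i_1} + h)` on `U`.
(Here `D_a f x = fderiv ℝ f x (Pi.single a 1)`.) -/
theorem no_exact_h_for_long_cycle (n m : ℕ) (hn : 2 ≤ n) (hm : 2 < m) (hmn : m ≤ n)
    (I : ℕ → Fin n) (hinj : Set.InjOn I (Set.Icc 1 m))
    (U : Set (Fin n → ℝ)) (hUopen : IsOpen U) (hU : stdSimplex ℝ (Fin n) ⊆ U) :
    ¬ ∃ h : (Fin n → ℝ) → ℝ, ContDiffOn ℝ 1 h U ∧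
      (∀ x ∈ U, ∀ k : ℕ, 1 ≤ k → k ≤ m - 2 →
        fderiv ℝ (fun y : Fin n → ℝ => y (I (k + 1)) / y (I k) + h y) x
            (Pi.single (I (k + 1)) 1)
          = fderiv ℝ (fun y : Fin n → ℝ => y (I (k + 2)) / y (I (k + 1)) + h y) x
              (Pi.single (I k) 1)) ∧
      (∀ x ∈ U,
        fderiv ℝ (fun y : Fin n → ℝ => y (I m) / y (I (m - 1)) + h y) x
            (Pi.single (I m) 1)
          = fderiv ℝ (fun y : Fin n → ℝ => y (I 1) / y (I m) + h y) x
              (Pi.single (I (m - 1)) 1)) ∧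
      (∀ x ∈ U,
        fderiv ℝ (fun y : Fin n → ℝ => y (I 1) / y (I m) + h y) x
            (Pi.single (I 1) 1)
          = fderiv ℝ (fun y : Fin n → ℝ => y (I 2) / y (I 1) + h y) x
              (Pi.single (I m) 1)) :=
  no_exact_h_for_long_cycle_general n m hm I hinj U hUopen hU
end

section
/- For a market with n > 2 assets, the only permutation p ∈ Σ_n for which the permutation-weighted portfolio π_i(t) = μ_{p(i)}(t) is functionally generated is the identity permutation (which gives the market portfolio). -/
/-!
With `H = ∇h`, the symmetry condition for `f_i(x) = x_{p(i)}` reads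
`H_a - H_b = [p a = b] / x_a - [p b = a] / x_b` for `a ≠ b`, so the right-hand side must sum to
zero around every triangle `i → j → k → i`. Take `i` moved by `p`, `j = p i` and any third index
`k`, at an interior point of the simplex. If `p` swaps `i` and `j`, the cyclic sum is
`1/x_i - 1/x_j`, nonzero once `x_i ≠ x_j`; if the cycle through `i` is longer, every surviving
term is positive. Conversely, for `p = 1` each `y ↦ y_i / y_i` has zero derivative: it is locally
constant where `y_i ≠ 0` and discontinuous where `y_i = 0`.
-/

open Filter Topology

theorem not_continuousAt_div_self_zero : ¬ ContinuousAt (fun t : ℝ => t / t) 0 := by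
  intro hc
  have h0 : Tendsto (fun t : ℝ => t / t) (𝓝[≠] 0) (𝓝 0) := by
    simpa using hc.tendsto.mono_left nhdsWithin_le_nhds
  have h1 : Tendsto (fun t : ℝ => t / t) (𝓝[≠] 0) (𝓝 1) :=
    tendsto_const_nhds.congr' (eventually_nhdsWithin_of_forall fun t ht => (div_self ht).symm)
  exact zero_ne_one (tendsto_nhds_unique h0 h1)

section

variable {ι : Type*} [DecidableEq ι]

theorem fderiv_apply_div_self (x : ι → ℝ) (i : ι) :
    fderiv ℝ (fun y : ι → ℝ => y i / y i) x = 0 := by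
  by_cases hx : x i = 0
  · refine fderiv_zero_of_not_differentiableAt fun hd => not_continuousAt_div_self_zero ?_
    have hline : Continuous fun t : ℝ => x + t • Pi.single i 1 := by fun_prop
    have := hd.continuousAt.comp_of_eq (hline.continuousAt (x := 0)) (by simp)
    simpa [Function.comp_def, hx] using this
  · have hone : (fun y : ι → ℝ => y i / y i) =ᶠ[𝓝 x] fun _ => 1 :=
      ((continuous_apply i).continuousAt.eventually_ne hx).mono fun y hy => div_self hy
    rw [hone.fderiv_eq, fderiv_const_apply]

/-- For `a ≠ b` this is `D_b (x_{p a} / x_a) - D_a (x_{p b} / x_b)`. -/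
noncomputable def permWeightCurl (p : Equiv.Perm ι) (x : ι → ℝ) (a b : ι) : ℝ :=
  (if p a = b then (x a)⁻¹ else 0) - (if p b = a then (x b)⁻¹ else 0)

theorem permWeightCurl_cyclic_sum_ne_zero {p : Equiv.Perm ι} {x : ι → ℝ} {i k : ι}
    (hki : k ≠ i) (hkj : k ≠ p i) (hx : ∀ a, 0 < x a) (hxi : x i ≠ x (p i)) :
    permWeightCurl p x i (p i) + permWeightCurl p x (p i) k + permWeightCurl p x k i ≠ 0 := by
  have hpk : p k ≠ p i := p.injective.ne hki
  have hpi : p i ≠ k := hkj.symm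
  by_cases hswap : p (p i) = i
  · have hpki : p k ≠ i := hswap ▸ p.injective.ne hkj
    simp only [permWeightCurl, hswap, hpk, hpi, hpki, hki.symm, if_true, if_false, sub_zero,
      add_zero]
    exact sub_ne_zero.2 (inv_injective.ne hxi)
  · simp only [permWeightCurl, hswap, hpk, hpi, if_true, if_false, sub_zero]
    have := inv_pos.2 (hx i); have := inv_pos.2 (hx (p i)); have := inv_pos.2 (hx k)
    refine ne_of_gt ?_
    split_ifs <;> linarith

variable [Fintype ι]

theorem fderiv_div_add_apply_single {x : ι → ℝ} {h : (ι → ℝ) → ℝ}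
    (hh : DifferentiableAt ℝ h x) {a b : ι} (hb : x b ≠ 0) (c : ι) :
    fderiv ℝ (fun y : ι → ℝ => y a / y b + h y) x (Pi.single c 1)
      = (if a = c then (x b)⁻¹ else 0) - (if b = c then x a / x b ^ 2 else 0)
        + fderiv ℝ h x (Pi.single c 1) := by
  have hinv : HasFDerivAt (fun y : ι → ℝ => (y b)⁻¹)
      (-(x b ^ 2)⁻¹ • ContinuousLinearMap.proj b) x :=
    (hasDerivAt_inv hb).comp_hasFDerivAt x (hasFDerivAt_apply (𝕜 := ℝ) b x)
  have hdiv : HasFDerivAt (fun y : ι → ℝ => y a / y b + h y)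
      (x a • -(x b ^ 2)⁻¹ • ContinuousLinearMap.proj b + (x b)⁻¹ • ContinuousLinearMap.proj a
        + fderiv ℝ h x) x :=
    ((hasFDerivAt_apply (𝕜 := ℝ) a x).mul hinv).add hh.hasFDerivAt
  rw [hdiv.fderiv]
  simp only [add_apply, smul_apply, ContinuousLinearMap.proj_apply, Pi.single_apply, smul_eq_mul]
  split_ifs <;> ring

theorem fderiv_sub_eq_permWeightCurl {p : Equiv.Perm ι} {x : ι → ℝ} {h : (ι → ℝ) → ℝ}
    (hh : DifferentiableAt ℝ h x) {a b : ι} (ha : x a ≠ 0) (hb : x b ≠ 0) (hab : a ≠ b)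
    (hsym : fderiv ℝ (fun y : ι → ℝ => y (p a) / y a + h y) x (Pi.single b 1)
      = fderiv ℝ (fun y : ι → ℝ => y (p b) / y b + h y) x (Pi.single a 1)) :
    fderiv ℝ h x (Pi.single a 1) - fderiv ℝ h x (Pi.single b 1) = permWeightCurl p x a b := by
  rw [fderiv_div_add_apply_single hh ha, fderiv_div_add_apply_single hh hb, if_neg hab,
    if_neg hab.symm] at hsym
  unfold permWeightCurl
  linarith

theorem exists_mem_stdSimplex_pos_ne {i j : ι} (hij : i ≠ j) :
    ∃ x ∈ stdSimplex ℝ ι, (∀ a, 0 < x a) ∧ x i ≠ x j := by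
  have hN : (0 : ℝ) < Fintype.card ι + 1 := by positivity
  refine ⟨fun a => (1 + if a = i then 1 else 0) / (Fintype.card ι + 1),
    ⟨fun a => by positivity, ?_⟩, fun a => by positivity, ?_⟩
  · rw [← Finset.sum_div, div_eq_one_iff_eq hN.ne', Finset.sum_add_distrib,
      Finset.sum_ite_eq' Finset.univ i]
    simp
  · rw [Ne, div_left_inj' hN.ne']
    simp [hij.symm]

end

/-- For a market with `n > 2` assets, the only permutation
`p ∈ Σ_n` for which the permutation-weighted portfolio `π_i = μ_{p(i)}` is
functionally generated is the identity permutation. Functional generation is taken,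
per Fernholz (2002, Prop. 3.1.11), to mean: there exists a `C¹` function `h` on an
open neighborhood `U` of the simplex with
`D_j (f_i(x)/x_i + h(x)) = D_i (f_j(x)/x_j + h(x))` for all `i, j`, where
`f_i(x) = x_{p(i)}` and `D_a f x = fderiv ℝ f x (Pi.single a 1)`. -/
theorem permutation_portfolio_generated_iff_identity (n : ℕ) (hn : 2 < n)
    (U : Set (Fin n → ℝ)) (hUopen : IsOpen U) (hU : stdSimplex ℝ (Fin n) ⊆ U)
    (p : Equiv.Perm (Fin n)) :
    (∃ h : (Fin n → ℝ) → ℝ, ContDiffOn ℝ 1 h U ∧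
      ∀ x ∈ U, ∀ i j : Fin n,
        fderiv ℝ (fun y : Fin n → ℝ => y (p i) / y i + h y) x (Pi.single j 1)
          = fderiv ℝ (fun y : Fin n → ℝ => y (p j) / y j + h y) x (Pi.single i 1))
    ↔ p = 1 := by
  constructor
  · rintro ⟨h, hh, hsym⟩
    by_contra hp
    obtain ⟨i, hi⟩ : ∃ i, p i ≠ i := by
      by_contra! hfix
      exact hp (Equiv.ext hfix)
    obtain ⟨k, hki, hkj⟩ := Fin.exists_ne_and_ne_of_two_lt i (p i) hn
    obtain ⟨x, hxΔ, hxpos, hxi⟩ := exists_mem_stdSimplex_pos_ne hi.symm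
    have hxU := hU hxΔ
    have hdh : DifferentiableAt ℝ h x :=
      (hh.differentiableOn one_ne_zero x hxU).differentiableAt (hUopen.mem_nhds hxU)
    have hcurl : ∀ a b, a ≠ b →
        fderiv ℝ h x (Pi.single a 1) - fderiv ℝ h x (Pi.single b 1) = permWeightCurl p x a b :=
      fun a b hab => fderiv_sub_eq_permWeightCurl hdh (hxpos a).ne' (hxpos b).ne' hab
        (hsym x hxU a b)
    refine permWeightCurl_cyclic_sum_ne_zero hki hkj hxpos hxi ?_
    rw [← hcurl i (p i) hi.symm, ← hcurl (p i) k hkj.symm, ← hcurl k i hki]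
    ring
  · rintro rfl
    refine ⟨fun _ => 0, contDiffOn_const, fun x _ i j => ?_⟩
    simp only [Equiv.Perm.coe_one, id_eq, add_zero, fderiv_apply_div_self,
      zero_apply]
end

section
/- If π is a portfolio whose weight processes π_1,…,π_n are continuous semimartingales, then its trading process T_π satisfies dT_π(t) = Σ_{i=1}^n d⟨π_i, log μ_i⟩_t + γ*_π(t) dt almost surely; in particular T_π is of locally bounded variation. -/
/-!
Writing the Stratonovich integrals in `log S_π` in Itô form, the Itô integrals `∫ π_i d log μ_i`
cancel in `T_π = log (Z_π / Z_μ) - log S_π`, leaving minus half the cross-variations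
`⟨π_i, log μ_i⟩` plus the drift `∫ γ*_π dt`. Locally bounded variation is preserved by sums and
scalar multiples, and the drift has it because an indefinite integral is absolutely continuous.
-/

open MeasureTheory intervalIntegral

section LocallyBoundedVariation

variable {α : Type*} [LinearOrder α] {E : Type*} [SeminormedAddCommGroup E]

theorem eVariationOn_add_le (f g : α → E) (s : Set α) :
    eVariationOn (fun x => f x + g x) s ≤ eVariationOn f s + eVariationOn g s := by
  refine iSup_le fun ⟨n, u, hu, us⟩ => ?_
  calc ∑ i ∈ Finset.range n, edist (f (u (i + 1)) + g (u (i + 1))) (f (u i) + g (u i))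
      ≤ ∑ i ∈ Finset.range n,
          (edist (f (u (i + 1))) (f (u i)) + edist (g (u (i + 1))) (g (u i))) :=
        Finset.sum_le_sum fun i _ => edist_add_add_le _ _ _ _
    _ = (∑ i ∈ Finset.range n, edist (f (u (i + 1))) (f (u i)))
          + ∑ i ∈ Finset.range n, edist (g (u (i + 1))) (g (u i)) := Finset.sum_add_distrib
    _ ≤ eVariationOn f s + eVariationOn g s :=
        add_le_add (eVariationOn.sum_le hu us) (eVariationOn.sum_le hu us)

theorem locallyBoundedVariationOn_const (c : E) (s : Set α) :
    LocallyBoundedVariationOn (fun _ : α => c) s :=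
  fun _ _ _ _ => (eVariationOn.constant_on (Set.subsingleton_singleton.anti
    (Set.image_subset_iff.2 fun _ _ => rfl))).trans_lt ENNReal.zero_lt_top |>.ne

namespace LocallyBoundedVariationOn

variable {f g : α → E} {s : Set α}

theorem add (hf : LocallyBoundedVariationOn f s) (hg : LocallyBoundedVariationOn g s) :
    LocallyBoundedVariationOn (fun x => f x + g x) s := fun a b ha hb =>
  ne_top_of_le_ne_top (ENNReal.add_ne_top.2 ⟨hf a b ha hb, hg a b ha hb⟩)
    (eVariationOn_add_le f g _)

theorem neg (hf : LocallyBoundedVariationOn f s) :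
    LocallyBoundedVariationOn (fun x => -f x) s :=
  LipschitzWith.neg LipschitzWith.id |>.comp_locallyBoundedVariationOn hf

theorem sub (hf : LocallyBoundedVariationOn f s) (hg : LocallyBoundedVariationOn g s) :
    LocallyBoundedVariationOn (fun x => f x - g x) s := by
  simpa only [sub_eq_add_neg] using hf.add hg.neg

theorem const_smul {𝕜 : Type*} [NormedField 𝕜] [NormedSpace 𝕜 E] (c : 𝕜)
    (hf : LocallyBoundedVariationOn f s) :
    LocallyBoundedVariationOn (fun x => c • f x) s :=
  (lipschitzWith_smul c).comp_locallyBoundedVariationOn hf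

theorem finset_sum {ι : Type*} (t : Finset ι) {f : ι → α → E}
    (hf : ∀ i ∈ t, LocallyBoundedVariationOn (f i) s) :
    LocallyBoundedVariationOn (fun x => ∑ i ∈ t, f i x) s := by
  classical
  induction t using Finset.induction_on with
  | empty => simpa using locallyBoundedVariationOn_const (0 : E) s
  | insert a t ha ih =>
    simp only [Finset.sum_insert ha]
    exact (hf a (Finset.mem_insert_self a t)).add
      (ih fun i hi => hf i (Finset.mem_insert_of_mem hi))

end LocallyBoundedVariationOn

end LocallyBoundedVariation

theorem locallyBoundedVariationOn_intervalIntegral {γ : ℝ → ℝ}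
    (hγ : ∀ a b : ℝ, IntervalIntegrable γ volume a b) (c : ℝ) :
    LocallyBoundedVariationOn (fun t => ∫ s in c..t, γ s) Set.univ := by
  intro a b _ _
  have hc : c ∈ Set.uIcc (min a c) (max b c) :=
    Set.mem_uIcc_of_le (min_le_right a c) (le_max_right b c)
  refine ((hγ _ _).absolutelyContinuousOnInterval_intervalIntegral hc).boundedVariationOn.mono ?_
  rw [Set.univ_inter, Set.uIcc_of_le ((min_le_right a c).trans (le_max_right b c))]
  exact Set.Icc_subset_Icc (min_le_left a c) (le_max_left b c)

/-- Pathwise model: `ItoInt i` is the Itô integral `∫₀^· π_i d log μ_i`, `V i` the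
cross-variation `⟨π_i, log μ_i⟩`, `γ` the excess growth rate `γ*_π`, `L = log (Z_π / Z_μ)`
and `logS = log S_π`. -/
theorem trading_process_locally_bounded_variation_general (n : ℕ)
    (ItoInt : Fin n → ℝ → ℝ)
    (V : Fin n → ℝ → ℝ) (hV : ∀ i, LocallyBoundedVariationOn (V i) Set.univ)
    (γ : ℝ → ℝ) (hγint : ∀ a b : ℝ, IntervalIntegrable γ volume a b)
    (L logS T : ℝ → ℝ)
    (hL : ∀ t, L t = L 0 + (∑ i, (ItoInt i t - ItoInt i 0)) + ∫ s in (0:ℝ)..t, γ s)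
    (hS : ∀ t, logS t
      = logS 0 + ∑ i, ((ItoInt i t - ItoInt i 0) + (1 / 2 : ℝ) * (V i t - V i 0)))
    (hT : ∀ t, T t = L t - logS t) :
    (∀ t, T t = T 0 - (1 / 2 : ℝ) * (∑ i, (V i t - V i 0)) + ∫ s in (0:ℝ)..t, γ s)
      ∧ LocallyBoundedVariationOn T Set.univ := by
  have hdT : ∀ t, T t = T 0 - (1 / 2 : ℝ) * (∑ i, (V i t - V i 0)) + ∫ s in (0:ℝ)..t, γ s := by
    intro t
    rw [hT, hL, hS, hT 0, Finset.sum_add_distrib, ← Finset.mul_sum]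
    ring
  refine ⟨hdT, ?_⟩
  have hcross : LocallyBoundedVariationOn (fun t => ∑ i, (V i t - V i 0)) Set.univ :=
    .finset_sum _ fun i _ => (hV i).sub (locallyBoundedVariationOn_const _ _)
  rw [funext hdT]
  exact ((locallyBoundedVariationOn_const _ _).sub (hcross.const_smul (1 / 2 : ℝ))).add
    (locallyBoundedVariationOn_intervalIntegral hγint 0)

/-- If `π` is a portfolio whose weight processes are continuous
semimartingales, then its trading process `T_π` satisfies
`dT_π = -(1/2) ∑ i, d⟨π_i, log μ_i⟩ + γ*_π dt` and is of locally bounded variation.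
Here (pathwise) `ItoInt i` denotes the ItoInt integral `∫_0^· π_i d log μ_i`, `V i` the
cross-variation process `⟨π_i, log μ_i⟩` (which is of locally bounded variation),
the Stratonovich structural process is
`logS t = logS 0 + ∑ i ((ItoInt i t - ItoInt i 0) + (1/2)(V i t - V i 0))`,
the relative log-return is `L t = L 0 + ∑ i (ItoInt i t - ItoInt i 0) + ∫_0^t γ*_π`,
and the trading process is `T = L - logS`. -/
theorem trading_process_locally_bounded_variation (n : ℕ)
    (π μ : Fin n → ℝ → ℝ) (hπcont : ∀ i, Continuous (π i))
    (hμpos : ∀ i t, 0 < μ i t)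
    (ItoInt : Fin n → ℝ → ℝ)
    (V : Fin n → ℝ → ℝ) (hV : ∀ i, LocallyBoundedVariationOn (V i) Set.univ)
    (γ : ℝ → ℝ) (hγint : ∀ a b : ℝ, IntervalIntegrable γ volume a b)
    (hγmeas : Measurable γ)
    (L logS T : ℝ → ℝ)
    (hL : ∀ t, L t = L 0 + (∑ i, (ItoInt i t - ItoInt i 0)) + ∫ s in (0:ℝ)..t, γ s)
    (hS : ∀ t, logS t
      = logS 0 + ∑ i, ((ItoInt i t - ItoInt i 0) + (1 / 2 : ℝ) * (V i t - V i 0)))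
    (hT : ∀ t, T t = L t - logS t) :
    (∀ t, T t = T 0 - (1 / 2 : ℝ) * (∑ i, (V i t - V i 0)) + ∫ s in (0:ℝ)..t, γ s)
      ∧ LocallyBoundedVariationOn T Set.univ :=
  trading_process_locally_bounded_variation_general n ItoInt V hV γ hγint L logS T hL hS hT
end

section
/- If π is the portfolio generated by a positive C² function S on Δⁿ, then d log S_π(t) = d log S(μ(t)) and dT_π(t) = dΘ(t) almost surely, i.e., the Stratonovich decomposition of the relative log-return coincides with the functionally generated decomposition log(Z_π/Z_μ) = log S(μ) + Θ. -/
/-- If `π` is the portfolio generated by a positive `C²` function `S` on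
the simplex, then the Stratonovich decomposition of the relative log-return coincides
with the functionally generated decomposition `log(Z_π/Z_μ) = log S(μ) + Θ`:
`d log S_π = d log S(μ(t))` and `dT_π = dΘ`. Here `strat Y X t` denotes the
Stratonovich integral `∫_0^t Y ∘ dX`, assumed additive in the integrand; the key facts
`Y μ_i ∘ d log μ_i = Y ∘ dμ_i` (substitution), `∑ i ∫ Y ∘ dμ_i = 0` (since
`∑ μ_i ≡ 1`), and the Stratonovich chain rule
`log S(μ(t)) - log S(μ(0)) = ∑ i ∫_0^t D_i log S(μ) ∘ dμ_i` are hypotheses;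
`π` has the functionally generated weights, the structural process satisfies
`logSπ t = logSπ 0 + ∑ i ∫_0^t π_i ∘ d log μ_i`, the generated decomposition
`L = log S(μ) + Θ` holds, and the trading process is `T = L - logSπ`. -/
theorem fg_decomposition_coincides (n : ℕ) (hn : 2 ≤ n)
    (S : (Fin n → ℝ) → ℝ) (hSpos : ∀ x ∈ stdSimplex ℝ (Fin n), 0 < S x)
    (hSC2 : ContDiff ℝ 2 S)
    (μ : Fin n → ℝ → ℝ) (hμpos : ∀ i t, 0 < μ i t) (hμsum : ∀ t, ∑ i, μ i t = 1)
    (strat : (ℝ → ℝ) → (ℝ → ℝ) → ℝ → ℝ)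
    (hadd : ∀ Y₁ Y₂ X : ℝ → ℝ, ∀ t : ℝ,
      strat (fun s => Y₁ s + Y₂ s) X t = strat Y₁ X t + strat Y₂ X t)
    (hsubst : ∀ (i : Fin n) (Y : ℝ → ℝ) (t : ℝ),
      strat (fun s => Y s * μ i s) (fun s => Real.log (μ i s)) t
        = strat Y (fun s => μ i s) t)
    (hzero : ∀ (Y : ℝ → ℝ) (t : ℝ), ∑ i, strat Y (fun s => μ i s) t = 0)
    (hchain : ∀ t : ℝ,
      Real.log (S (fun i => μ i t)) - Real.log (S (fun i => μ i 0))
        = ∑ i, strat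
            (fun s => fderiv ℝ (fun x => Real.log (S x)) (fun j => μ j s)
              (Pi.single i 1))
            (fun s => μ i s) t)
    (π : Fin n → ℝ → ℝ)
    (hπ : ∀ i t, π i t
      = (fderiv ℝ (fun x => Real.log (S x)) (fun j => μ j t) (Pi.single i 1)
          + 1
          - ∑ j, μ j t *
              fderiv ℝ (fun x => Real.log (S x)) (fun j' => μ j' t) (Pi.single j 1))
        * μ i t)
    (logSπ : ℝ → ℝ)
    (hstruct : ∀ t, logSπ t
      = logSπ 0 + ∑ i, strat (π i) (fun s => Real.log (μ i s)) t)
    (L Θ T : ℝ → ℝ)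
    (hFG : ∀ t, L t = Real.log (S (fun i => μ i t)) + Θ t)
    (hT : ∀ t, T t = L t - logSπ t) :
    (∀ t, logSπ t - logSπ 0
        = Real.log (S (fun i => μ i t)) - Real.log (S (fun i => μ i 0)))
      ∧ (∀ t, T t - T 0 = Θ t - Θ 0) := by
  set D : Fin n → ℝ → ℝ := fun i s =>
    fderiv ℝ (fun x => Real.log (S x)) (fun j => μ j s) (Pi.single i 1) with hD
  set c : ℝ → ℝ := fun s => 1 - ∑ j, μ j s * D j s with hc
  have key : ∀ t, logSπ t - logSπ 0
      = Real.log (S (fun i => μ i t)) - Real.log (S (fun i => μ i 0)) := by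
    intro t
    have hstep : ∀ i, strat (π i) (fun s => Real.log (μ i s)) t
        = strat (D i) (fun s => μ i s) t + strat c (fun s => μ i s) t := by
      intro i
      have hπ' : π i = fun s => (fun s => D i s * μ i s) s + (fun s => c s * μ i s) s := by
        funext s; rw [hπ]; simp only [hc, hD]; ring
      rw [hπ', hadd, hsubst i (D i) t, hsubst i c t]
    rw [hstruct t]
    rw [Finset.sum_congr rfl (fun i _ => hstep i), Finset.sum_add_distrib,
      hzero c t, hchain t]
    ring
  refine ⟨key, fun t => ?_⟩
  have := key t
  rw [hT t, hT 0, hFG t, hFG 0]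
  linarith
end

section
/- In a first-order model {X_1,…,X_n} with growth parameters g_1,…,g_n satisfying g_1+⋯+g_n = 0 and g_1+⋯+g_k < 0 for k < n, if the reverse-weighted portfolio π (with π_i(t) = μ_{(n+1−r_t(i))}(t)) has excess growth rate γ*_π(t) ≥ γ*_μ(t) a.s., then γ_π(t) > γ_μ(t) a.s. for t ∈ [0,∞) except on a set of Lebesgue measure zero. -/
open MeasureTheory

/-- In a first-order model with growth parameters `g 1, …, g n`
satisfying `∑ g k = 0` and `g 1 + ⋯ + g k < 0` for `k < n`, if the reverse-weighted
portfolio has excess growth rate `γ*_π(t) ≥ γ*_μ(t)`, then `γ_π(t) > γ_μ(t)`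
for Lebesgue-a.e. `t ∈ [0,∞)`. Here `μr k t` is the ranked market weight
`μ_{(k+1)}(t)` (0-indexed, so `μr` is a.e. strictly decreasing in rank),
`γμ t = ∑ k, μ_{(k)} g_k + γ*_μ t` and `γπ t = ∑ k, μ_{(n+1-k)} g_k + γ*_π t`
(reversal expressed with `Fin.rev`). -/
theorem reverse_weighted_growth_exceeds_market (n : ℕ) (hn : 2 ≤ n)
    (g : Fin n → ℝ)
    (hg0 : ∑ k, g k = 0)
    (hgpart : ∀ m : ℕ, 0 < m → m < n →
      ∑ k ∈ Finset.univ.filter (fun k : Fin n => (k : ℕ) < m), g k < 0)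
    (μr : Fin n → ℝ → ℝ) (hμpos : ∀ k t, 0 < μr k t)
    (hμsum : ∀ t, ∑ k, μr k t = 1)
    (hrank : ∀ᵐ t ∂(volume.restrict (Set.Ici (0:ℝ))),
      ∀ k l : Fin n, k < l → μr l t < μr k t)
    (γsμ γsπ : ℝ → ℝ) (hγs : ∀ t, 0 ≤ t → γsμ t ≤ γsπ t)
    (γμ γπ : ℝ → ℝ)
    (hγμ : ∀ t, γμ t = (∑ k, μr k t * g k) + γsμ t)
    (hγπ : ∀ t, γπ t = (∑ k, μr k.rev t * g k) + γsπ t) :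
    ∀ᵐ t ∂(volume.restrict (Set.Ici (0:ℝ))), γμ t < γπ t := by
  have hmem : ∀ᵐ t ∂(volume.restrict (Set.Ici (0:ℝ))), t ∈ Set.Ici (0:ℝ) :=
    ae_restrict_mem measurableSet_Ici
  filter_upwards [hrank, hmem] with t hr ht
  rw [hγμ, hγπ]
  have hγ := hγs t ht
  -- extended sequences on ℕ
  set f : ℕ → ℝ := fun i => if h : i < n then μr (Fin.rev ⟨i, h⟩) t - μr ⟨i, h⟩ t else 0
    with hf
  set gg : ℕ → ℝ := fun i => if h : i < n then g ⟨i, h⟩ else 0 with hgg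
  -- partial sums of gg match the filtered sums
  have hG : ∀ m : ℕ, m ≤ n → ∑ i ∈ Finset.range m, gg i
      = ∑ k ∈ Finset.univ.filter (fun k : Fin n => (k : ℕ) < m), g k := by
    intro m hm
    have hset : Finset.filter (fun i => i < m) (Finset.range n) = Finset.range m := by
      ext i
      simp only [Finset.mem_filter, Finset.mem_range]
      omega
    have h1 : ∑ i ∈ Finset.range m, gg i = ∑ i ∈ Finset.range n, if i < m then gg i else 0 := by
      rw [← hset, Finset.sum_filter]
    rw [h1, ← Fin.sum_univ_eq_sum_range (fun i => if i < m then gg i else 0) n,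
      Finset.sum_filter]
    refine Finset.sum_congr rfl fun k _ => ?_
    by_cases hk : (k : ℕ) < m
    · simp [hk, hgg, k.isLt]
    · simp [hk]
  -- total sum of gg is zero
  have hGn : ∑ i ∈ Finset.range n, gg i = 0 := by
    rw [hG n le_rfl, ← hg0]
    refine Finset.sum_congr ?_ fun _ _ => rfl
    simp [Finset.filter_true_of_mem, Fin.isLt]
  -- partial sums strictly negative for 0 < m < n
  have hGneg : ∀ m : ℕ, 0 < m → m < n → ∑ i ∈ Finset.range m, gg i < 0 := by
    intro m h1 h2
    rw [hG m h2.le]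
    exact hgpart m h1 h2
  -- f is strictly increasing step by step on indices < n - 1
  have hfmono : ∀ i : ℕ, i < n - 1 → 0 < f (i + 1) - f i := by
    intro i hi
    have h1 : i + 1 < n := by omega
    have h0 : i < n := by omega
    have hlt : (⟨i, h0⟩ : Fin n) < ⟨i + 1, h1⟩ := by simp [Fin.lt_def]
    have hrevlt : (Fin.rev ⟨i + 1, h1⟩ : Fin n) < Fin.rev ⟨i, h0⟩ := by
      simp [Fin.lt_def, Fin.rev]; omega
    have hA := hr _ _ hlt
    have hB := hr _ _ hrevlt
    simp only [hf, dif_pos h0, dif_pos h1]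
    linarith
  -- summation by parts
  have habel := Finset.sum_range_by_parts f gg n
  have hsum : ∑ i ∈ Finset.range n, f i • gg i > 0 := by
    rw [habel, hGn, smul_zero]
    have hneg : ∑ i ∈ Finset.range (n - 1), (f (i + 1) - f i) • (∑ j ∈ Finset.range (i + 1), gg j) < 0 := by
      have hne : (Finset.range (n - 1)).Nonempty := by
        rw [Finset.nonempty_range_iff]; omega
      have : ∀ i ∈ Finset.range (n - 1),
          (f (i + 1) - f i) • (∑ j ∈ Finset.range (i + 1), gg j) < 0 := by
        intro i hi
        rw [Finset.mem_range] at hi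
        have h1 := hfmono i hi
        have h2 := hGneg (i + 1) (by omega) (by omega)
        have := mul_neg_of_pos_of_neg h1 h2
        simpa [smul_eq_mul] using this
      calc ∑ i ∈ Finset.range (n - 1), (f (i + 1) - f i) • (∑ j ∈ Finset.range (i + 1), gg j)
          < ∑ _i ∈ Finset.range (n - 1), (0:ℝ) := Finset.sum_lt_sum_of_nonempty hne this
        _ = 0 := by simp
    linarith
  -- translate back to the Fin sums
  have hkey : ∑ k : Fin n, μr k t * g k < ∑ k : Fin n, μr k.rev t * g k := by
    have heq : ∑ i ∈ Finset.range n, f i • gg i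
        = ∑ k : Fin n, (μr k.rev t - μr k t) * g k := by
      rw [← Fin.sum_univ_eq_sum_range (fun i => f i • gg i) n]
      refine Finset.sum_congr rfl fun k _ => ?_
      simp [hf, hgg, k.isLt, smul_eq_mul]
    rw [heq] at hsum
    have : ∑ k : Fin n, (μr k.rev t - μr k t) * g k
        = (∑ k : Fin n, μr k.rev t * g k) - ∑ k : Fin n, μr k t * g k := by
      rw [← Finset.sum_sub_distrib]
      exact Finset.sum_congr rfl fun k _ => by ring
    linarith [this ▸ hsum]
  linarith
end

section
/- In a first-order model with rank-symmetric variance parameters σ²_k = σ²_{n+1−k} > 0 for k = 1,…,n, the excess growth rate of the reverse-weighted portfolio equals that of the market portfolio: γ*_π(t) = γ*_μ(t) a.s., and consequently γ_π(t) > γ_μ(t) a.s. except on a Lebesgue-null set of times. -/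
/-!
Because the volatilities are symmetric in rank, reversing the weights only permutes the terms of
the excess growth rate, so `γ*_π = γ*_μ`. The growth rates then differ by
`∑ (μ_(n-1-k) - μ_(k)) g_k`, whose coefficients increase strictly in `k` when the ranked weights
decrease strictly; Abel summation against the partial sums of `g`, which vanish at `n` and are
negative in between, makes this difference positive.
-/

open MeasureTheory Finset

/-- Excess growth rate for the diagonal covariance matrix `diag σsq`. -/
noncomputable def excessGrowthRate {n : ℕ} (σsq w : Fin n → ℝ) : ℝ :=
  (1 / 2 : ℝ) * ((∑ k, w k * σsq k) - ∑ k, w k ^ 2 * σsq k)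

theorem Fin.sum_comp_rev_mul_of_rev_eq {R : Type*} [AddCommMonoid R] [Mul R] {n : ℕ}
    {σ : Fin n → R} (hσ : ∀ k, σ k.rev = σ k) (f : Fin n → R) :
    ∑ k, f k.rev * σ k = ∑ k, f k * σ k :=
  Fintype.sum_equiv Fin.revPerm _ _ fun k => by simp [hσ]

theorem excessGrowthRate_comp_rev {n : ℕ} {σsq : Fin n → ℝ} (hσ : ∀ k, σsq k.rev = σsq k)
    (w : Fin n → ℝ) : excessGrowthRate σsq (fun k => w k.rev) = excessGrowthRate σsq w := by
  unfold excessGrowthRate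
  rw [Fin.sum_comp_rev_mul_of_rev_eq hσ w, Fin.sum_comp_rev_mul_of_rev_eq hσ (w · ^ 2)]

theorem sum_range_mul_pos_of_partial_sums_neg {n : ℕ} (hn : 2 ≤ n) {c g : ℕ → ℝ}
    (hc : ∀ i, i + 1 < n → c i < c (i + 1)) (hg : ∑ i ∈ range n, g i = 0)
    (hpart : ∀ m, 0 < m → m < n → ∑ i ∈ range m, g i < 0) :
    0 < ∑ i ∈ range n, c i * g i := by
  have hby_parts := sum_range_by_parts c g n
  simp only [smul_eq_mul, hg, mul_zero, zero_sub] at hby_parts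
  have hneg : ∑ i ∈ range (n - 1), (c (i + 1) - c i) * ∑ j ∈ range (i + 1), g j < 0 := by
    refine sum_neg (fun i hi => ?_) ⟨0, mem_range.2 (by omega)⟩
    have hi : i + 1 < n := by rw [mem_range] at hi; omega
    exact mul_neg_of_pos_of_neg (sub_pos.2 (hc i hi)) (hpart (i + 1) i.succ_pos hi)
  linarith

theorem Fin.sum_filter_val_lt_eq_sum_range {M : Type*} [AddCommMonoid M] {n m : ℕ} (hm : m ≤ n)
    (f : Fin n → M) :
    ∑ k ∈ univ.filter (fun k : Fin n => (k : ℕ) < m), f k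
      = ∑ i ∈ range m, if h : i < n then f ⟨i, h⟩ else 0 := by
  have hrange : (univ.filter (fun k : Fin n => (k : ℕ) < m)).map Fin.valEmbedding = range m := by
    ext i
    simp only [mem_map, mem_filter, mem_univ, true_and, Fin.valEmbedding_apply, mem_range]
    exact ⟨fun ⟨k, hk, hki⟩ => hki ▸ hk, fun hi => ⟨⟨i, by omega⟩, hi, rfl⟩⟩
  rw [← hrange, sum_map]
  simp

theorem Fin.sum_mul_pos_of_strictMono_of_partial_sums_neg {n : ℕ} (hn : 2 ≤ n)
    {c g : Fin n → ℝ} (hc : StrictMono c) (hg : ∑ k, g k = 0)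
    (hpart : ∀ m : ℕ, 0 < m → m < n →
      ∑ k ∈ univ.filter (fun k : Fin n => (k : ℕ) < m), g k < 0) :
    0 < ∑ k, c k * g k := by
  rw [sum_fin_eq_sum_range]
  have hsum_eq : ∀ i ∈ range n, (if h : i < n then c ⟨i, h⟩ * g ⟨i, h⟩ else 0)
      = (if h : i < n then c ⟨i, h⟩ else 0) * (if h : i < n then g ⟨i, h⟩ else 0) := by
    intro i hi
    simp [mem_range.1 hi]
  rw [sum_congr rfl hsum_eq]
  refine sum_range_mul_pos_of_partial_sums_neg hn (fun i hi => ?_) ?_ fun m hm0 hmn => ?_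
  · simpa [hi, (by omega : i < n)] using hc (Fin.mk_lt_mk.2 i.lt_succ_self)
  · rwa [← Fin.sum_filter_val_lt_eq_sum_range le_rfl, filter_true_of_mem fun k _ => k.isLt]
  · rw [← Fin.sum_filter_val_lt_eq_sum_range hmn.le]
    exact hpart m hm0 hmn

theorem Fin.sum_mul_lt_sum_comp_rev_mul {n : ℕ} (hn : 2 ≤ n) {a g : Fin n → ℝ}
    (ha : StrictAnti a) (hg : ∑ k, g k = 0)
    (hpart : ∀ m : ℕ, 0 < m → m < n →
      ∑ k ∈ univ.filter (fun k : Fin n => (k : ℕ) < m), g k < 0) :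
    ∑ k, a k * g k < ∑ k, a k.rev * g k := by
  have hc : StrictMono fun k => a k.rev - a k :=
    fun _ _ hkl => sub_lt_sub (ha (Fin.rev_lt_rev.2 hkl)) (ha hkl)
  have hpos := Fin.sum_mul_pos_of_strictMono_of_partial_sums_neg hn hc hg hpart
  simp only [sub_mul, sum_sub_distrib] at hpos
  linarith

theorem reverse_weighted_symmetric_variance_general (n : ℕ) (hn : 2 ≤ n)
    (g : Fin n → ℝ)
    (hg0 : ∑ k, g k = 0)
    (hgpart : ∀ m : ℕ, 0 < m → m < n →
      ∑ k ∈ Finset.univ.filter (fun k : Fin n => (k : ℕ) < m), g k < 0)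
    (σsq : Fin n → ℝ) (hσsym : ∀ k : Fin n, σsq k.rev = σsq k)
    (μr : Fin n → ℝ → ℝ)
    (hrank : ∀ᵐ t ∂(volume.restrict (Set.Ici (0:ℝ))),
      ∀ k l : Fin n, k < l → μr l t < μr k t)
    (γsμ γsπ : ℝ → ℝ)
    (hγsμ : ∀ t, γsμ t
      = (1 / 2 : ℝ) * ((∑ k, μr k t * σsq k) - ∑ k, (μr k t) ^ 2 * σsq k))
    (hγsπ : ∀ t, γsπ t
      = (1 / 2 : ℝ) * ((∑ k, μr k.rev t * σsq k) - ∑ k, (μr k.rev t) ^ 2 * σsq k))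
    (γμ γπ : ℝ → ℝ)
    (hγμ : ∀ t, γμ t = (∑ k, μr k t * g k) + γsμ t)
    (hγπ : ∀ t, γπ t = (∑ k, μr k.rev t * g k) + γsπ t) :
    (∀ t, γsπ t = γsμ t)
      ∧ ∀ᵐ t ∂(volume.restrict (Set.Ici (0:ℝ))), γμ t < γπ t := by
  have hexcess : ∀ t, γsπ t = γsμ t := fun t => by
    rw [hγsπ, hγsμ]
    exact excessGrowthRate_comp_rev hσsym (μr · t)
  refine ⟨hexcess, ?_⟩
  filter_upwards [hrank] with t hanti
  rw [hγμ, hγπ, hexcess]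
  exact add_lt_add_left (Fin.sum_mul_lt_sum_comp_rev_mul hn hanti hg0 hgpart) _

/-- In a first-order model with rank-symmetric variance parameters
`σ²_k = σ²_{n+1-k} > 0`, the excess growth rate of the reverse-weighted portfolio
equals that of the market, `γ*_π(t) = γ*_μ(t)`, and consequently `γ_π(t) > γ_μ(t)`
for Lebesgue-a.e. `t ∈ [0,∞)`. Since the driving Brownian motions are independent,
the covariance rates are diagonal and
`γ*_μ = (1/2)(∑ μ_{(k)} σ²_k - ∑ μ_{(k)}² σ²_k)`,
`γ*_π = (1/2)(∑ μ_{(n+1-k)} σ²_k - ∑ μ_{(n+1-k)}² σ²_k)` (0-indexed via `Fin.rev`);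
the growth parameters satisfy the first-order stability conditions. -/
theorem reverse_weighted_symmetric_variance (n : ℕ) (hn : 2 ≤ n)
    (g : Fin n → ℝ)
    (hg0 : ∑ k, g k = 0)
    (hgpart : ∀ m : ℕ, 0 < m → m < n →
      ∑ k ∈ Finset.univ.filter (fun k : Fin n => (k : ℕ) < m), g k < 0)
    (σsq : Fin n → ℝ) (hσpos : ∀ k, 0 < σsq k) (hσsym : ∀ k : Fin n, σsq k.rev = σsq k)
    (μr : Fin n → ℝ → ℝ) (hμpos : ∀ k t, 0 < μr k t)
    (hμsum : ∀ t, ∑ k, μr k t = 1)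
    (hrank : ∀ᵐ t ∂(volume.restrict (Set.Ici (0:ℝ))),
      ∀ k l : Fin n, k < l → μr l t < μr k t)
    (γsμ γsπ : ℝ → ℝ)
    (hγsμ : ∀ t, γsμ t
      = (1 / 2 : ℝ) * ((∑ k, μr k t * σsq k) - ∑ k, (μr k t) ^ 2 * σsq k))
    (hγsπ : ∀ t, γsπ t
      = (1 / 2 : ℝ) * ((∑ k, μr k.rev t * σsq k) - ∑ k, (μr k.rev t) ^ 2 * σsq k))
    (γμ γπ : ℝ → ℝ)
    (hγμ : ∀ t, γμ t = (∑ k, μr k t * g k) + γsμ t)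
    (hγπ : ∀ t, γπ t = (∑ k, μr k.rev t * g k) + γsπ t) :
    (∀ t, γsπ t = γsμ t)
      ∧ ∀ᵐ t ∂(volume.restrict (Set.Ici (0:ℝ))), γμ t < γπ t :=
  reverse_weighted_symmetric_variance_general n hn g hg0 hgpart σsq hσsym μr hrank γsμ γsπ hγsμ hγsπ
    γμ γπ hγμ hγπ
end
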